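/- Fix the shared-seed coordinated sampling setup and a function f : V → ℝ_{≥0} admitting a nonnegative unbiased estimator. For every v ∈ V and every ρ ∈ (0, 1/4], the v-optimal estimates f̂^{(v)}(u) = −dH_f^{(v)}(u)/du satisfy ∫_{ρ/2}^{4ρ} f̂^{(v)}(u) du ≥ (1/2) · ( f̲^{(v)}(ρ) − f̲^{(v)}(4ρ) ). -/

import Mathlib

open MeasureTheory Set Filter Topology

noncomputable section

/-- A shared-seed coordinated sampling scheme on a data domain `V ⊆ ℝ_{≥0}^r`:
continuous non-decreasing seed-to-threshold maps `τ i : [0,1] → ℝ` whose range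
infimum is at most the infimum of the `i`-th coordinate over the domain. -/
structure CoordScheme (r : ℕ) where
  V : Set (Fin r → ℝ)
  τ : Fin r → ℝ → ℝ
  V_nonneg : ∀ v ∈ V, ∀ i, 0 ≤ v i
  τ_cont : ∀ i, ContinuousOn (τ i) (Set.Icc 0 1)
  τ_mono : ∀ i, MonotoneOn (τ i) (Set.Icc 0 1)
  τ_inf : ∀ i, sInf (τ i '' Set.Icc 0 1) ≤ sInf ((fun v => v i) '' V)

namespace CoordScheme

variable {r : ℕ}

/-- The set `S(u,v)` of sampled entries: `i` is sampled iff `v i ≥ τ i u`. -/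
def sampled (C : CoordScheme r) (u : ℝ) (v : Fin r → ℝ) : Set (Fin r) :=
  {i | C.τ i u ≤ v i}

/-- The consistent set `V*(u,v)` of data vectors consistent with the outcome `S(u,v)`. -/
def Vstar (C : CoordScheme r) (u : ℝ) (v : Fin r → ℝ) : Set (Fin r → ℝ) :=
  {z ∈ C.V | ∀ i, (C.τ i u ≤ v i → z i = v i) ∧ (v i < C.τ i u → z i < C.τ i u)}

/-- The lower bound function `f̲(u,v) = inf { f z : z ∈ V*(u,v) }`. -/
def lb (C : CoordScheme r) (f : (Fin r → ℝ) → ℝ) (u : ℝ) (v : Fin r → ℝ) : ℝ :=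
  sInf (f '' C.Vstar u v)

/-- An estimator: an integrable function of the outcome (it takes equal values on
data vectors consistent with the same outcome). -/
structure IsEstimator (C : CoordScheme r) (fhat : ℝ → (Fin r → ℝ) → ℝ) : Prop where
  integrable : ∀ v ∈ C.V, IntegrableOn (fun u => fhat u v) (Set.Ioc (0:ℝ) 1)
  consistent : ∀ u ∈ Set.Ioc (0:ℝ) 1, ∀ v ∈ C.V, ∀ z ∈ C.Vstar u v, fhat u v = fhat u z

/-- A nonnegative estimator. -/
def Nonneg (C : CoordScheme r) (fhat : ℝ → (Fin r → ℝ) → ℝ) : Prop :=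
  ∀ u ∈ Set.Ioc (0:ℝ) 1, ∀ v ∈ C.V, 0 ≤ fhat u v

/-- An unbiased estimator of `f`. -/
def Unbiased (C : CoordScheme r) (f : (Fin r → ℝ) → ℝ)
    (fhat : ℝ → (Fin r → ℝ) → ℝ) : Prop :=
  ∀ v ∈ C.V, (∫ u in Set.Ioc (0:ℝ) 1, fhat u v) = f v

end CoordScheme

/-- Lower convex hull of `g` on `(0,1]`: the pointwise largest convex function
bounded above by `g` there. -/
def lowerHull (g : ℝ → ℝ) (u : ℝ) : ℝ :=
  sSup {y : ℝ | ∃ h : ℝ → ℝ, ConvexOn ℝ (Set.Ioc (0:ℝ) 1) h ∧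
      (∀ x ∈ Set.Ioc (0:ℝ) 1, h x ≤ g x) ∧ y = h u}

namespace CoordScheme

variable {r : ℕ}

/-- The `v`-optimal estimates: the negated derivative of the lower hull of the
lower-bound function `u ↦ f̲(u,v)`. -/
def optEst (C : CoordScheme r) (f : (Fin r → ℝ) → ℝ) (v : Fin r → ℝ) (u : ℝ) : ℝ :=
  -deriv (lowerHull (fun x => C.lb f x v)) u

/-- Cumulative integral `∫_{2^{-j}}^1` of the J estimator (by its defining recursion):
`Jint (j+1) = Jint j + (value on `(2^{-j-1},2^{-j}]`) ⬝ 2^{-j-1}`. -/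
def Jint (C : CoordScheme r) (f : (Fin r → ℝ) → ℝ) (v : Fin r → ℝ) : ℕ → ℝ
  | 0 => 0
  | (j+1) => Jint C f v j +
      ((2:ℝ) ^ (j+1) * (C.lb f ((2:ℝ) ^ (-(j:ℤ))) v - Jint C f v j)) * (2:ℝ) ^ (-(j:ℤ) - 1)

/-- The (constant) value of the J estimator on the dyadic interval `(2^{-j-1}, 2^{-j}]`.
For `j = 0` this is `2 ⬝ f̲(1,v)`; for `j ≥ 1` it is
`2^{j+1} ⬝ ( f̲(2^{-j},v) − ∫_{2^{-j}}^1 f̂⁽ᴶ⁾(x,v) dx )`. -/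
def Jval (C : CoordScheme r) (f : (Fin r → ℝ) → ℝ) (v : Fin r → ℝ) (j : ℕ) : ℝ :=
  (2:ℝ) ^ (j+1) * (C.lb f ((2:ℝ) ^ (-(j:ℤ))) v - Jint C f v j)

/-- The J estimator `f̂⁽ᴶ⁾(u,v)`: on `u ∈ (2^{-j-1}, 2^{-j}]` it takes the value `Jval j`. -/
def Jest (C : CoordScheme r) (f : (Fin r → ℝ) → ℝ) (u : ℝ) (v : Fin r → ℝ) : ℝ :=
  C.Jval f v ⌊-Real.logb 2 u⌋₊

end CoordScheme

/-! Write `H` for the lower convex hull of `g = f̲⁽ᵛ⁾`. Being convex and antitone on `(0, 1]`, `H` is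
Lipschitz on `[ρ/2, 4ρ]`, so the fundamental theorem of calculus for absolutely continuous
functions gives `∫_{ρ/2}^{4ρ} f̂⁽ᵛ⁾ = H(ρ/2) - H(4ρ)`. Since `g` is antitone, the chord from
`(0, g ρ)` to `(ρ, H ρ)` lies below `g` on `(0, ρ]`, hence below `H`; at `ρ/2` this reads
`H(ρ/2) ≥ (g ρ + H ρ)/2`. Together with `H(4ρ) ≤ H ρ` and `H(4ρ) ≤ g(4ρ)` this gives the bound. -/

namespace CoordScheme

variable {r : ℕ} (C : CoordScheme r)

lemma mem_Vstar_self {v : Fin r → ℝ} (hv : v ∈ C.V) (u : ℝ) : v ∈ C.Vstar u v :=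
  ⟨hv, fun _ => ⟨fun _ => rfl, id⟩⟩

lemma Vstar_mono (v : Fin r → ℝ) {u u' : ℝ} (hu : u ∈ Icc (0 : ℝ) 1) (hu' : u' ∈ Icc (0 : ℝ) 1)
    (huu' : u ≤ u') : C.Vstar u v ⊆ C.Vstar u' v := by
  rintro z ⟨hzV, hz⟩
  have hτ : ∀ i, C.τ i u ≤ C.τ i u' := fun i => C.τ_mono i hu hu' huu'
  refine ⟨hzV, fun i => ⟨fun h => (hz i).1 ((hτ i).trans h), fun h => ?_⟩⟩
  rcases lt_or_ge (v i) (C.τ i u) with hlt | hge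
  · exact ((hz i).2 hlt).trans_le (hτ i)
  · rwa [(hz i).1 hge]

variable {C} {f : (Fin r → ℝ) → ℝ}

lemma lb_nonneg (hf : ∀ z ∈ C.V, 0 ≤ f z) (u : ℝ) (v : Fin r → ℝ) : 0 ≤ C.lb f u v :=
  Real.sInf_nonneg <| by
    rintro _ ⟨z, hz, rfl⟩
    exact hf z hz.1

lemma lb_antitoneOn (hf : ∀ z ∈ C.V, 0 ≤ f z) {v : Fin r → ℝ} (hv : v ∈ C.V) :
    AntitoneOn (fun u => C.lb f u v) (Icc 0 1) := fun u hu u' hu' huu' =>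
  csInf_le_csInf ⟨0, by rintro _ ⟨z, hz, rfl⟩; exact hf z hz.1⟩
    ⟨f v, v, C.mem_Vstar_self hv u, rfl⟩ (image_mono (C.Vstar_mono v hu hu' huu'))

end CoordScheme

namespace ConvexOn

variable {S : Set ℝ} {f : ℝ → ℝ} {a b c : ℝ}

lemma lipschitzOnWith_of_antitoneOn (hf : ConvexOn ℝ S f) (hanti : AntitoneOn f S)
    (ha : a ∈ S) (hc : c ∈ S) (hab : a < b) :
    LipschitzOnWith (-slope f a b).toNNReal f (Icc b c) := by
  have hsub : Icc a c ⊆ S := hf.1.ordConnected.out ha hc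
  refine LipschitzOnWith.of_le_add_mul' _ fun x hx y hy => ?_
  have hb : b ∈ S := hsub ⟨hab.le, hx.1.trans hx.2⟩
  have hslope : slope f a b ≤ 0 := by
    rw [slope_def_field]
    exact div_nonpos_of_nonpos_of_nonneg (sub_nonpos.2 (hanti ha hb hab.le)) (sub_pos.2 hab).le
  have hxS : x ∈ S := hsub ⟨hab.le.trans hx.1, hx.2⟩
  have hyS : y ∈ S := hsub ⟨hab.le.trans hy.1, hy.2⟩
  rcases lt_or_ge x y with hxy | hyx
  · have hay : a < y := hab.trans_le (hx.1.trans hxy.le)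
    have : slope f a b ≤ slope f x y :=
      calc slope f a b ≤ slope f a y :=
            hf.slope_mono ha ⟨hb, hab.ne'⟩ ⟨hyS, hay.ne'⟩ (hx.1.trans hxy.le)
        _ = slope f y a := slope_comm f a y
        _ ≤ slope f y x :=
            hf.slope_mono hyS ⟨ha, hay.ne⟩ ⟨hxS, hxy.ne⟩ (hab.le.trans hx.1)
        _ = slope f x y := slope_comm f y x
    have hdiff : (y - x) * slope f x y = f y - f x := sub_smul_slope f x y
    have := mul_le_mul_of_nonneg_left this (sub_pos.2 hxy).le
    rw [Real.dist_eq, abs_of_neg (sub_neg.2 hxy)]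
    linarith
  · have := mul_nonneg (neg_nonneg.2 hslope) (dist_nonneg (x := x) (y := y))
    linarith [hanti hyS hxS hyx]

lemma integral_deriv_eq_sub_of_antitoneOn (hf : ConvexOn ℝ S f) (hanti : AntitoneOn f S)
    (ha : a ∈ S) (hc : c ∈ S) (hab : a < b) (hbc : b ≤ c) :
    ∫ x in b..c, deriv f x = f c - f b := by
  have hlip := hf.lipschitzOnWith_of_antitoneOn hanti ha hc hab
  rw [← uIcc_of_le hbc] at hlip
  exact hlip.absolutelyContinuousOnInterval.integral_deriv_eq_sub

end ConvexOn

section lowerHull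

variable {g : ℝ → ℝ} {u : ℝ}

lemma le_lowerHull {h : ℝ → ℝ} (hh : ConvexOn ℝ (Ioc 0 1) h) (hhg : ∀ x ∈ Ioc (0 : ℝ) 1, h x ≤ g x)
    (hu : u ∈ Ioc (0 : ℝ) 1) : h u ≤ lowerHull g u :=
  le_csSup ⟨g u, by rintro _ ⟨h', -, hh'g, rfl⟩; exact hh'g u hu⟩ ⟨h, hh, hhg, rfl⟩

lemma lowerHull_le_of_forall (hg : BddBelow (g '' Ioc 0 1)) {y : ℝ}
    (H : ∀ h : ℝ → ℝ, ConvexOn ℝ (Ioc 0 1) h → (∀ x ∈ Ioc (0 : ℝ) 1, h x ≤ g x) → h u ≤ y) :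
    lowerHull g u ≤ y := by
  obtain ⟨m, hm⟩ := hg
  refine csSup_le ⟨m, fun _ => m, convexOn_const m (convex_Ioc 0 1),
    fun x hx => hm ⟨x, hx, rfl⟩, rfl⟩ ?_
  rintro _ ⟨h, hh, hhg, rfl⟩
  exact H h hh hhg

lemma lowerHull_le (hg : BddBelow (g '' Ioc 0 1)) (hu : u ∈ Ioc (0 : ℝ) 1) :
    lowerHull g u ≤ g u :=
  lowerHull_le_of_forall hg fun _ _ hhg => hhg u hu

lemma convexOn_lowerHull (hg : BddBelow (g '' Ioc 0 1)) : ConvexOn ℝ (Ioc 0 1) (lowerHull g) := by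
  refine ⟨convex_Ioc 0 1, fun x hx y hy a b ha hb hab => lowerHull_le_of_forall hg ?_⟩
  intro h hh hhg
  calc h (a • x + b • y) ≤ a • h x + b • h y := hh.2 hx hy ha hb hab
    _ ≤ a • lowerHull g x + b • lowerHull g y := by
        simp only [smul_eq_mul]
        gcongr
        exacts [le_lowerHull hh hhg hx, le_lowerHull hh hhg hy]

lemma antitoneOn_lowerHull (hg : BddBelow (g '' Ioc 0 1)) (hanti : AntitoneOn g (Ioc 0 1)) :
    AntitoneOn (lowerHull g) (Ioc 0 1) := by
  intro p hp q hq hpq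
  by_contra! hlt
  have hpq : p < q := hpq.lt_of_ne (by rintro rfl; exact hlt.false)
  have hF := convexOn_lowerHull hg
  -- a convex function that increases on `[p, q]` keeps increasing after `q`
  have hright : ∀ x ∈ Ioc (0 : ℝ) 1, q < x → lowerHull g q ≤ lowerHull g x := by
    intro x hx hqx
    have := hF.slope_mono_adjacent hp hx hpq hqx
    have : 0 < (lowerHull g x - lowerHull g q) / (x - q) :=
      (div_pos (sub_pos.2 hlt) (sub_pos.2 hpq)).trans_le this
    linarith [(div_pos_iff_of_pos_right (sub_pos.2 hqx)).1 this]
  have hmax : ∀ x ∈ Ioc (0 : ℝ) 1, max (lowerHull g x) (lowerHull g q) ≤ g x := by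
    intro x hx
    refine max_le (lowerHull_le hg hx) ?_
    rcases le_or_gt x q with hxq | hqx
    · exact (lowerHull_le hg hq).trans (hanti hx hq hxq)
    · exact (hright x hx hqx).trans (lowerHull_le hg hx)
  have := le_lowerHull (hF.sup (convexOn_const _ (convex_Ioc 0 1))) hmax hp
  exact hlt.not_ge ((le_max_right _ _).trans this)

lemma affine_le_lowerHull (hg : BddBelow (g '' Ioc 0 1)) {a b t x : ℝ}
    (ht : t ∈ Ioc (0 : ℝ) 1) (hle : ∀ y ∈ Ioc 0 t, a * y + b ≤ g y)
    (hlet : a * t + b ≤ lowerHull g t) (hx : x ∈ Ioc 0 t) : a * x + b ≤ lowerHull g x := by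
  by_contra! hlt
  have hx1 : x ∈ Ioc (0 : ℝ) 1 := ⟨hx.1, hx.2.trans ht.2⟩
  have hxt : x < t := hx.2.lt_of_ne (by rintro rfl; exact hlt.not_ge hlet)
  have hF := convexOn_lowerHull hg
  -- the hull crosses the line upwards between `x` and `t`, so it stays above it after `t`
  have hright : ∀ y ∈ Ioc (0 : ℝ) 1, t < y → a * y + b ≤ lowerHull g y := by
    intro y hy hty
    have hslope := hF.slope_mono_adjacent hx1 hy hxt hty
    have : a < (lowerHull g t - lowerHull g x) / (t - x) := by
      rw [lt_div_iff₀ (sub_pos.2 hxt)]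
      linarith
    have := (this.trans_le hslope)
    rw [lt_div_iff₀ (sub_pos.2 hty)] at this
    linarith
  have hmax : ∀ y ∈ Ioc (0 : ℝ) 1, max (lowerHull g y) (a * y + b) ≤ g y := by
    intro y hy
    refine max_le (lowerHull_le hg hy) ?_
    rcases le_or_gt y t with hyt | hty
    · exact hle y ⟨hy.1, hyt⟩
    · exact (hright y hy hty).trans (lowerHull_le hg hy)
  have haff : ConvexOn ℝ (Ioc 0 1) (fun y => a * y + b) :=
    ⟨convex_Ioc 0 1, fun y _ z _ p q _ _ hpq => le_of_eq <| by
      simp only [smul_eq_mul]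
      linear_combination (-b) * hpq⟩
  have := le_lowerHull (hF.sup haff) hmax hx1
  exact hlt.not_ge ((le_max_right _ _).trans this)

lemma add_div_two_le_lowerHull_half (hg : BddBelow (g '' Ioc 0 1))
    (hanti : AntitoneOn g (Ioc 0 1)) {t : ℝ} (ht : t ∈ Ioc (0 : ℝ) 1) :
    (g t + lowerHull g t) / 2 ≤ lowerHull g (t / 2) := by
  have hslope : (lowerHull g t - g t) / t ≤ 0 :=
    div_nonpos_of_nonpos_of_nonneg (sub_nonpos.2 (lowerHull_le hg ht)) ht.1.le
  have := affine_le_lowerHull hg ht (a := (lowerHull g t - g t) / t) (b := g t)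
    (fun y hy => by
      have := mul_nonpos_of_nonpos_of_nonneg hslope hy.1.le
      linarith [hanti ⟨hy.1, hy.2.trans ht.2⟩ ht hy.2])
    (by rw [div_mul_cancel₀ _ ht.1.ne']; linarith) ⟨half_pos ht.1, half_le_self ht.1.le⟩
  have ht0 := ht.1.ne'
  field_simp at this ⊢
  linarith

end lowerHull

theorem stmt16_general {r : ℕ} (C : CoordScheme r) (f : (Fin r → ℝ) → ℝ)
    (hf : ∀ v ∈ C.V, 0 ≤ f v)
    (v : Fin r → ℝ) (hv : v ∈ C.V) (ρ : ℝ) (hρ : ρ ∈ Set.Ioc (0:ℝ) (1/4)) :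
    (1/2) * (C.lb f ρ v - C.lb f (4 * ρ) v) ≤
      ∫ u in Set.Ioc (ρ/2) (4 * ρ), C.optEst f v u := by
  obtain ⟨hρ0, hρ4⟩ := hρ
  unfold CoordScheme.optEst
  set g := fun u => C.lb f u v
  have hg : BddBelow (g '' Ioc 0 1) := ⟨0, by rintro _ ⟨u, -, rfl⟩; exact C.lb_nonneg hf u v⟩
  have hanti : AntitoneOn g (Ioc 0 1) := (C.lb_antitoneOn hf hv).mono Ioc_subset_Icc_self
  have hmem : ∀ {x}, 0 < x → x ≤ 4 * ρ → x ∈ Ioc (0 : ℝ) 1 := fun h0 h1 => ⟨h0, by linarith⟩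
  have hF := convexOn_lowerHull hg
  have hFanti := antitoneOn_lowerHull hg hanti
  have hFTC : ∫ u in (ρ / 2)..(4 * ρ), deriv (lowerHull g) u
      = lowerHull g (4 * ρ) - lowerHull g (ρ / 2) :=
    hF.integral_deriv_eq_sub_of_antitoneOn hFanti (hmem (by positivity) (by linarith))
      (hmem (by positivity) le_rfl) (by linarith : ρ / 4 < ρ / 2) (by linarith)
  have hhalf := add_div_two_le_lowerHull_half hg hanti (hmem hρ0 (by linarith))
  have h4g := lowerHull_le hg (hmem (by positivity) le_rfl)
  have h4ρ := hFanti (hmem hρ0 (by linarith)) (hmem (by positivity) le_rfl) (by linarith)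
  rw [integral_neg, ← intervalIntegral.integral_of_le (by linarith), hFTC]
  linarith

/-- for every `v ∈ V` and `ρ ∈ (0, 1/4]`, the `v`-optimal estimates
satisfy `∫_{ρ/2}^{4ρ} f̂⁽ᵛ⁾(u) du ≥ (1/2) ⬝ ( f̲⁽ᵛ⁾(ρ) − f̲⁽ᵛ⁾(4ρ) )`. -/
theorem stmt16 {r : ℕ} (C : CoordScheme r) (f : (Fin r → ℝ) → ℝ)
    (hf : ∀ v ∈ C.V, 0 ≤ f v)
    (hex : ∃ g, C.IsEstimator g ∧ C.Nonneg g ∧ C.Unbiased f g)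
    (v : Fin r → ℝ) (hv : v ∈ C.V) (ρ : ℝ) (hρ : ρ ∈ Set.Ioc (0:ℝ) (1/4)) :
    (1/2) * (C.lb f ρ v - C.lb f (4 * ρ) v) ≤
      ∫ u in Set.Ioc (ρ/2) (4 * ρ), C.optEst f v u :=
  stmt16_general C f hf v hv ρ hρ
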